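/- If N = (p_1 p_2 ⋯ p_t)^{2a} = m^2 is a quasiperfect number (where p_1, ..., p_t are distinct primes and a is a positive integer), then for every i ∈ {1, ..., t}, the integer p_i^2 + p_i + 1 divides σ(N) = 2m^2 + 1 and has no prime factor congruent to 7 or 13 modulo 24. -/

import Mathlib

/-- A positive integer `N` is quasiperfect if `σ(N) = 2N + 1`. -/
def Quasiperfect (N : ℕ) : Prop :=
  0 < N ∧ ArithmeticFunction.sigma 1 N = 2 * N + 1

/-!
Write `s p = σ(p ^ (2a))`, so that `∏ s pᵢ = σ(N) = 2m² + 1`. For a prime `q ∣ 2m² + 1` the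
residue `-2` is a square mod `q`, so `q ≡ 1, 3 (mod 8)`; these residues are closed under
multiplication, so every divisor of `2m² + 1`, in particular every `s pᵢ`, is `1` or `3 mod 8`.
As `s 2 ≡ 7 (mod 8)`, all `pᵢ` are odd, hence so is `m`, and `2m² + 1 ≡ 3 (mod 4)`.
Modulo any `n` with `p² ≡ 1 (mod n)` one has `s p ≡ 1 + a(p + 1)`: for even `a` every factor
would be `1 mod 4`, so `a` is odd; then `s 3 ≡ 5 (mod 8)`, so no `pᵢ` is `3`, so `3 ∤ m` and
`3 ∣ 2m² + 1`. Thus `3` divides some `s pᵢ ≡ 1 + a(pᵢ + 1) (mod 3)`, which forces `3 ∣ 2a + 1`,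
and then `pᵢ² + pᵢ + 1` divides the geometric sum `s pᵢ` of `2a + 1` terms. Its prime factors,
being `1` or `3 mod 8`, are never `7` or `13 mod 24`.
-/

open ArithmeticFunction Finset
open scoped ArithmeticFunction.sigma

theorem geom_sum_dvd_geom_sum_mul {R : Type*} [CommSemiring R] (x : R) (n b : ℕ) :
    ∑ j ∈ range n, x ^ j ∣ ∑ j ∈ range (n * b), x ^ j := by
  induction b with
  | zero => simp
  | succ b ih =>
    rw [Nat.mul_succ, sum_range_add]
    simp_rw [pow_add, ← mul_sum]
    exact dvd_add ih (dvd_mul_left _ _)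

theorem geom_sum_two_mul_add_one_of_sq_eq_one {R : Type*} [CommRing R] {x : R} (hx : x ^ 2 = 1)
    (a : ℕ) : ∑ j ∈ range (2 * a + 1), x ^ j = 1 + a * (x + 1) := by
  induction a with
  | zero => simp
  | succ a ih =>
    have heven : x ^ (2 * a) = 1 := by rw [pow_mul, hx, one_pow]
    rw [show 2 * (a + 1) + 1 = 2 * a + 1 + 1 + 1 by ring, sum_range_succ, sum_range_succ, ih,
      pow_succ x (2 * a + 1), pow_succ x (2 * a), heven]
    push_cast
    linear_combination hx

theorem sq_add_add_one_dvd_sigma_one_prime_pow {p k : ℕ} (hp : p.Prime) (hk : 3 ∣ k + 1) :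
    p ^ 2 + p + 1 ∣ σ 1 (p ^ k) := by
  obtain ⟨b, hb⟩ := hk
  rw [sigma_one_apply_prime_pow hp, hb]
  have h3 : ∑ j ∈ range 3, p ^ j = p ^ 2 + p + 1 := by simp only [sum_range_succ]; ring
  exact h3 ▸ geom_sum_dvd_geom_sum_mul p 3 b

theorem sigma_one_prime_pow_two_mul_cast {R : Type*} [CommRing R] {p : ℕ} (hp : p.Prime)
    (hsq : (p : R) ^ 2 = 1) (a : ℕ) : (σ 1 (p ^ (2 * a)) : R) = 1 + a * (p + 1) := by
  rw [sigma_one_apply_prime_pow hp]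
  push_cast
  exact geom_sum_two_mul_add_one_of_sq_eq_one hsq a

theorem sigma_one_two_pow_two_mul_mod_eight {a : ℕ} (ha : 0 < a) :
    σ 1 (2 ^ (2 * a)) % 8 = 7 := by
  rw [sigma_one_apply_prime_pow Nat.prime_two, Nat.geomSum_eq le_rfl, Nat.div_one]
  have h8 : 8 ∣ 2 ^ (2 * a + 1) := pow_dvd_pow 2 (by omega : 3 ≤ 2 * a + 1)
  have hpos : 0 < 2 ^ (2 * a + 1) := by positivity
  omega

theorem sigma_one_three_pow_two_mul_mod_eight {a : ℕ} (ha : Odd a) :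
    σ 1 (3 ^ (2 * a)) % 8 = 5 := by
  rw [show 5 = 5 % 8 from rfl, ← ZMod.natCast_eq_natCast_iff',
    sigma_one_prime_pow_two_mul_cast Nat.prime_three (by decide) a]
  obtain ⟨c, rfl⟩ := ha
  push_cast
  generalize (c : ZMod 8) = y
  revert y
  decide

theorem ZMod.natCast_sq_eq_one_of_odd {n p : ℕ} (hn : n ∣ 8) (hp : Odd p) :
    (p : ZMod n) ^ 2 = 1 := by
  have h8 : (p : ZMod 8) ^ 2 = 1 := by
    obtain ⟨k, rfl⟩ := hp
    push_cast
    generalize (k : ZMod 8) = y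
    revert y
    decide
  simpa only [map_pow, map_natCast, map_one] using congrArg (ZMod.castHom hn (ZMod n)) h8

theorem ZMod.natCast_sq_eq_one_of_not_three_dvd {p : ℕ} (hp : ¬ 3 ∣ p) :
    (p : ZMod 3) ^ 2 = 1 := by
  rw [← ZMod.natCast_eq_zero_iff] at hp
  generalize (p : ZMod 3) = x at hp
  revert x
  decide

theorem three_dvd_two_mul_sq_add_one {m : ℕ} (hm : ¬ 3 ∣ m) : 3 ∣ 2 * m ^ 2 + 1 := by
  rw [← ZMod.natCast_eq_zero_iff]
  push_cast
  rw [ZMod.natCast_sq_eq_one_of_not_three_dvd hm]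
  decide

theorem three_dvd_two_mul_add_one_of_three_dvd_sigma_one {p a : ℕ} (hp : p.Prime)
    (hp3 : ¬ 3 ∣ p) (h : 3 ∣ σ 1 (p ^ (2 * a))) : 3 ∣ 2 * a + 1 := by
  rw [← ZMod.natCast_eq_zero_iff] at h ⊢
  rw [sigma_one_prime_pow_two_mul_cast hp (ZMod.natCast_sq_eq_one_of_not_three_dvd hp3)] at h
  rw [← ZMod.natCast_eq_zero_iff] at hp3
  push_cast
  generalize (p : ZMod 3) = x at hp3 h
  generalize (a : ZMod 3) = y at h ⊢
  revert x y
  decide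

theorem Nat.Prime.mod_eight_of_dvd_two_mul_sq_add_one {q m : ℕ} (hq : q.Prime)
    (hdvd : q ∣ 2 * m ^ 2 + 1) : q % 8 = 1 ∨ q % 8 = 3 := by
  have hq2 : q ≠ 2 := by
    rintro rfl
    omega
  have : Fact q.Prime := ⟨hq⟩
  rw [← ZMod.natCast_eq_zero_iff] at hdvd
  push_cast at hdvd
  refine (ZMod.exists_sq_eq_neg_two_iff hq2).mp ⟨2 * m, ?_⟩
  linear_combination (-2 : ZMod q) * hdvd

theorem mod_eight_of_dvd_two_mul_sq_add_one {d m : ℕ} (hd : d ∣ 2 * m ^ 2 + 1) :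
    d % 8 = 1 ∨ d % 8 = 3 := by
  induction d using Nat.recOnMul with
  | zero => simp at hd
  | one => simp
  | prime q hq => exact hq.mod_eight_of_dvd_two_mul_sq_add_one hd
  | mul b c hb hc =>
    rw [Nat.mul_mod]
    rcases hb (dvd_of_mul_right_dvd hd) with h | h <;>
      rcases hc (dvd_of_mul_left_dvd hd) with h' | h' <;> simp [h, h']

theorem ArithmeticFunction.IsMultiplicative.map_prod_prime_pow {R : Type*}
    [CommMonoidWithZero R] {f : ArithmeticFunction R} (hf : f.IsMultiplicative) {ι : Type*}
    [Fintype ι] {p : ι → ℕ} (hp : ∀ i, (p i).Prime) (hinj : Function.Injective p) (k : ℕ) :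
    f ((∏ i, p i) ^ k) = ∏ i, f (p i ^ k) := by
  rw [← prod_pow]
  refine hf.map_prod _ _ fun i _ j _ hij => ?_
  exact ((Nat.coprime_primes (hp i) (hp j)).mpr (hinj.ne hij)).pow k k

theorem exists_eq_of_prime_dvd_prod_pow {ι : Type*} [Fintype ι] {p : ι → ℕ}
    (hp : ∀ i, (p i).Prime) {q k : ℕ} (hq : q.Prime) (h : q ∣ (∏ i, p i) ^ k) :
    ∃ i, p i = q := by
  obtain ⟨i, -, hi⟩ := (Prime.dvd_finsetProd_iff hq.prime _).mp (hq.dvd_of_dvd_pow h)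
  exact ⟨i, ((Nat.prime_dvd_prime_iff_eq hq (hp i)).mp hi).symm⟩

section ProdSigmaEq

variable {ι : Type*} [Fintype ι] {p : ι → ℕ} {a m : ℕ}
  (hσ : ∏ i, σ 1 (p i ^ (2 * a)) = 2 * m ^ 2 + 1)
include hσ

theorem sigma_dvd_of_prod_sigma_eq (i : ι) : σ 1 (p i ^ (2 * a)) ∣ 2 * m ^ 2 + 1 :=
  hσ ▸ dvd_prod_of_mem _ (mem_univ i)

theorem ne_two_of_prod_sigma_eq (ha : 0 < a) (i : ι) : p i ≠ 2 := by
  intro h2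
  have := mod_eight_of_dvd_two_mul_sq_add_one (sigma_dvd_of_prod_sigma_eq hσ i)
  rw [h2, sigma_one_two_pow_two_mul_mod_eight ha] at this
  omega

variable (hp : ∀ i, (p i).Prime) (hm : (∏ i, p i) ^ (2 * a) = m ^ 2) (ha : 0 < a)
include hp hm ha

theorem odd_of_prod_sigma_eq : Odd a := by
  have hodd i : Odd (p i) := (hp i).odd_of_ne_two (ne_two_of_prod_sigma_eq hσ ha i)
  have hm2 : ¬ 2 ∣ m := fun h => by
    obtain ⟨i, hi⟩ := exists_eq_of_prime_dvd_prod_pow hp Nat.prime_two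
      (hm ▸ dvd_pow h two_ne_zero)
    exact ne_two_of_prod_sigma_eq hσ ha i hi
  by_contra hae
  obtain ⟨c, rfl⟩ := Nat.not_odd_iff_even.mp hae
  have hfactor i : (σ 1 (p i ^ (2 * (c + c))) : ZMod 4) = 1 := by
    rw [sigma_one_prime_pow_two_mul_cast (hp i)
      (ZMod.natCast_sq_eq_one_of_odd (by norm_num) (hodd i))]
    obtain ⟨d, hd⟩ := hodd i
    rw [hd]
    push_cast
    generalize (c : ZMod 4) = y
    generalize (d : ZMod 4) = z
    revert y z
    decide
  have h4 := congrArg (Nat.cast : ℕ → ZMod 4) hσ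
  push_cast at h4
  rw [ZMod.natCast_sq_eq_one_of_odd (by norm_num) (Nat.odd_iff.mpr (by omega))] at h4
  simp only [hfactor, prod_const_one] at h4
  exact absurd h4 (by decide)

theorem ne_three_of_prod_sigma_eq (i : ι) : p i ≠ 3 := by
  intro h3
  have := mod_eight_of_dvd_two_mul_sq_add_one (sigma_dvd_of_prod_sigma_eq hσ i)
  rw [h3, sigma_one_three_pow_two_mul_mod_eight (odd_of_prod_sigma_eq hσ hp hm ha)] at this
  omega

theorem three_dvd_two_mul_add_one_of_prod_sigma_eq : 3 ∣ 2 * a + 1 := by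
  have hm3 : ¬ 3 ∣ m := fun h => by
    obtain ⟨i, hi⟩ := exists_eq_of_prime_dvd_prod_pow hp Nat.prime_three
      (hm ▸ dvd_pow h two_ne_zero)
    exact ne_three_of_prod_sigma_eq hσ hp hm ha i hi
  have h3 := three_dvd_two_mul_sq_add_one hm3
  rw [← hσ] at h3
  obtain ⟨i, -, hi⟩ := (Prime.dvd_finsetProd_iff Nat.prime_three.prime _).mp h3
  refine three_dvd_two_mul_add_one_of_three_dvd_sigma_one (hp i) (fun h => ?_) hi
  exact ne_three_of_prod_sigma_eq hσ hp hm ha i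
    ((Nat.prime_dvd_prime_iff_eq Nat.prime_three (hp i)).mp h).symm

end ProdSigmaEq

/-- If `N = (p₁ p₂ ⋯ p_t)^{2a} = m²` is quasiperfect, then for every `i`,
`p i ^ 2 + p i + 1` divides `σ(N) = 2 m² + 1` and has no prime factor congruent
to `7` or `13` modulo `24`. -/
theorem stmt_6 (t : ℕ) (p : Fin t → ℕ) (a N m : ℕ)
    (hp : ∀ i, (p i).Prime) (hinj : Function.Injective p)
    (ha : 0 < a)
    (hN : N = (∏ i, p i) ^ (2 * a)) (hm : N = m ^ 2)
    (hq : Quasiperfect N) :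
    ArithmeticFunction.sigma 1 N = 2 * m ^ 2 + 1 ∧
      ∀ i : Fin t, (p i ^ 2 + p i + 1) ∣ 2 * m ^ 2 + 1 ∧
        ∀ q : ℕ, q.Prime → q ∣ p i ^ 2 + p i + 1 → q % 24 ≠ 7 ∧ q % 24 ≠ 13 := by
  have hσN : σ 1 N = 2 * m ^ 2 + 1 := by rw [hq.2, hm]
  have hσ : ∏ i, σ 1 (p i ^ (2 * a)) = 2 * m ^ 2 + 1 := by
    rw [← hσN, hN, isMultiplicative_sigma.map_prod_prime_pow hp hinj]
  have h3 := three_dvd_two_mul_add_one_of_prod_sigma_eq hσ hp (hN ▸ hm) ha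
  refine ⟨hσN, fun i => ?_⟩
  have hdvd : p i ^ 2 + p i + 1 ∣ 2 * m ^ 2 + 1 :=
    (sq_add_add_one_dvd_sigma_one_prime_pow (hp i) h3).trans (sigma_dvd_of_prod_sigma_eq hσ i)
  refine ⟨hdvd, fun q hq hqd => ?_⟩
  have := hq.mod_eight_of_dvd_two_mul_sq_add_one (hqd.trans hdvd)
  omega
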